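/- arXiv:1906.12024 — 2 statements merged into one kernel-verified Lean document; each statement's English description precedes it below -/
import Mathlib

section
/- Given a linear SEM (B, D) with diagonal D, if i is a terminal vertex (no k with B_{k,i} ≠ 0), then the precision matrix satisfies 1/σ_i² = Ω_{ii} and B_{i,k} = −σ_i² Ω_{i,k} for all k ≠ i. -/
open Matrix

/-- For a linear SEM (B, D) with diagonal D, if i is a terminal vertex then
1/σ_i² = Ω_{ii} and B_{i,k} = -σ_i² Ω_{i,k} for all k ≠ i. -/
theorem stmt_4 (p : ℕ) (B : Matrix (Fin p) (Fin p) ℝ) (σsq : Fin p → ℝ)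
    (hσ : ∀ k, 0 < σsq k) (hB : IsUnit (1 - B))
    (i : Fin p) (hterm : ∀ k, B k i = 0) :
    1 / σsq i = (((1 - B)ᵀ * (Matrix.diagonal σsq)⁻¹ * (1 - B) : Matrix (Fin p) (Fin p) ℝ)) i i
    ∧ ∀ k, k ≠ i →
        B i k = -(σsq i) * (((1 - B)ᵀ * (Matrix.diagonal σsq)⁻¹ * (1 - B) : Matrix (Fin p) (Fin p) ℝ)) i k := by
  have hne : ∀ k, σsq k ≠ 0 := fun k => (hσ k).ne'
  have hkey : ∀ k, (((1 - B)ᵀ * (Matrix.diagonal σsq)⁻¹ * (1 - B) : Matrix (Fin p) (Fin p) ℝ)) i k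
      = (σsq i)⁻¹ * ((1 : Matrix (Fin p) (Fin p) ℝ) i k - B i k) := by
    intro k
    have hdi : (Matrix.diagonal σsq)⁻¹ = Matrix.diagonal (fun j => (σsq j)⁻¹) := by
      apply Matrix.inv_eq_right_inv
      rw [Matrix.diagonal_mul_diagonal]
      simp [mul_inv_cancel₀ (hne _)]
    rw [hdi]
    simp [Matrix.mul_apply, Matrix.diagonal, Matrix.transpose_apply, Matrix.sub_apply,
      Matrix.one_apply, hterm, sub_mul, Finset.mul_sum, Ring.inverse_eq_inv',
      Finset.sum_ite_eq, apply_ite]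
  constructor
  · rw [hkey i]
    simp [Matrix.one_apply, hterm, one_div]
  · intro k hk
    rw [hkey k]
    field_simp [Matrix.one_apply, hk.symm, hne i]
    simp [Matrix.one_apply_ne hk.symm]
end

section
/- With σ² = 2/3 and the fully-connected bipartite SEM on p vertices (|U| = ⌈p/2⌉, |V| = ⌊p/2⌋), the KL divergence from the SEM's Gaussian distribution to the standard Gaussian N(0, I_p) is at most (p/2) ln(3/2). -/
open Matrix

/-! With σ² = 2/3 the trace of Σ is (⌈p/2⌉ + 2⌊p/2⌋)·(2/3) ≤ (3p/2)·(2/3) = p, so the term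
tr Σ − p of the divergence is nonpositive, and −log det Σ = p·log(3/2) is all that remains. -/

theorem ceil_half_add_two_mul_floor_half_le (p : ℕ) :
    (((p + 1) / 2 : ℕ) : ℝ) + 2 * ((p / 2 : ℕ) : ℝ) ≤ 3 / 2 * p := by
  have h : 2 * ((p + 1) / 2) + 4 * (p / 2) ≤ 3 * p := by omega
  have h' := (Nat.cast_le (α := ℝ)).mpr h
  push_cast at h'
  linarith

theorem half_mul_sub_sub_log_pow_le {t c : ℝ} {n : ℕ} (ht : t ≤ n) :
    (1 / 2 : ℝ) * (t - n - Real.log (c ^ n)) ≤ (n / 2 : ℝ) * Real.log c⁻¹ := by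
  rw [Real.log_pow, Real.log_inv]
  linarith

/-- With σ² = 2/3 and the bipartite SEM covariance Σ satisfying
tr Σ = ⌈p/2⌉σ² + 2⌊p/2⌋σ² and det Σ = (σ²)^p, the KL divergence
(1/2)(tr Σ - p - log det Σ) to the standard Gaussian is at most (p/2) ln(3/2). -/
theorem stmt_15 (p : ℕ) (Sig : Matrix (Fin p) (Fin p) ℝ)
    (htr : Sig.trace = (((p + 1) / 2 : ℕ) : ℝ) * (2 / 3)
        + 2 * ((p / 2 : ℕ) : ℝ) * (2 / 3))
    (hdet : Sig.det = (2 / 3 : ℝ) ^ p) :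
    (1 / 2 : ℝ) * (Sig.trace - p - Real.log Sig.det)
      ≤ (p / 2 : ℝ) * Real.log (3 / 2) := by
  have htr_le : Sig.trace ≤ p := by
    linarith [ceil_half_add_two_mul_floor_half_le p]
  have h := half_mul_sub_sub_log_pow_le (c := 2 / 3) htr_le
  rwa [← hdet, show (2 / 3 : ℝ)⁻¹ = 3 / 2 by norm_num] at h
end
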